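/- arXiv:2209.12716 — 6 statements merged into one kernel-verified Lean document; each statement's English description precedes it below -/
import Mathlib

section
/- For every (1,1)-tensor field A on a smooth manifold M, every integer m ≥ 1, and vector fields X,Y, the generalized Nijenhuis torsion of level m admits the closed form τ^{(m)}_A(X,Y) = Σ_{p=0}^m Σ_{q=0}^m (−1)^{2m−p−q} binom(m,p) binom(m,q) A^{p+q} [A^{m−p}X, A^{m−q}Y]. -/
open scoped Manifold

noncomputable section

variable {E : Type*} [NormedAddCommGroup E] [NormedSpace ℝ E]
  {H : Type*} [TopologicalSpace H] {I : ModelWithCorners ℝ E H}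
  {M : Type*} [TopologicalSpace M] [ChartedSpace H M] [IsManifold I (⊤ : ℕ∞) M]

/-- Smooth vector fields on `M`, modeled as derivations of the algebra of smooth
real-valued functions on `M`. -/
abbrev VectorFieldOn (I : ModelWithCorners ℝ E H) (M : Type*) [TopologicalSpace M]
    [ChartedSpace H M] [IsManifold I (⊤ : ℕ∞) M] :=
  Derivation ℝ (C^(⊤ : ℕ∞)⟮I, M; ℝ⟯) (C^(⊤ : ℕ∞)⟮I, M; ℝ⟯)

/-- (1,1)-tensor fields (operator fields): `C^∞(M)`-linear endomorphisms of the
module of vector fields. -/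
abbrev TensorField11 (I : ModelWithCorners ℝ E H) (M : Type*) [TopologicalSpace M]
    [ChartedSpace H M] [IsManifold I (⊤ : ℕ∞) M] :=
  Module.End (C^(⊤ : ℕ∞)⟮I, M; ℝ⟯) (VectorFieldOn I M)

/-- The Nijenhuis torsion of `A`. -/
def nijTorsion (A : TensorField11 I M) (X Y : VectorFieldOn I M) : VectorFieldOn I M :=
  (A ^ 2) ⁅X, Y⁆ + ⁅A X, A Y⁆ - A (⁅X, A Y⁆ + ⁅A X, Y⁆)

/-- The generalized Nijenhuis torsion of level `m`. -/
def genNijTorsion (A : TensorField11 I M) :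
    ℕ → VectorFieldOn I M → VectorFieldOn I M → VectorFieldOn I M
  | 0 => fun X Y => ⁅X, Y⁆
  | m + 1 => fun X Y =>
      (A ^ 2) (genNijTorsion A m X Y) + genNijTorsion A m (A X) (A Y)
        - A (genNijTorsion A m X (A Y) + genNijTorsion A m (A X) Y)


set_option synthInstance.maxHeartbeats 1000000
set_option maxHeartbeats 1600000

/-- Bilinear-map-like functions on vector fields. -/
abbrev Bil (I : ModelWithCorners ℝ E H) (M : Type*) [TopologicalSpace M]
    [ChartedSpace H M] [IsManifold I (⊤ : ℕ∞) M] :=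
  VectorFieldOn I M → VectorFieldOn I M → VectorFieldOn I M

def opL (A : TensorField11 I M) : Module.End ℤ (Bil I M) where
  toFun b := fun X Y => A (b X Y)
  map_add' b c := funext fun X => funext fun Y => by simp
  map_smul' n b := funext fun X => funext fun Y => by simp

def opR1 (A : TensorField11 I M) : Module.End ℤ (Bil I M) where
  toFun b := fun X Y => b (A X) Y
  map_add' _ _ := rfl
  map_smul' _ _ := rfl

def opR2 (A : TensorField11 I M) : Module.End ℤ (Bil I M) where
  toFun b := fun X Y => b X (A Y)
  map_add' _ _ := rfl
  map_smul' _ _ := rfl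

lemma opL_pow (A : TensorField11 I M) (k : ℕ) (b : Bil I M) (X Y : VectorFieldOn I M) :
    ((opL A ^ k) b) X Y = (A ^ k) (b X Y) := by
  induction k with
  | zero => simp
  | succ k ih =>
    rw [pow_succ', Module.End.mul_apply, pow_succ', Module.End.mul_apply]
    show A (((opL A ^ k) b) X Y) = A ((A ^ k) (b X Y))
    rw [ih]

lemma negR1_pow (A : TensorField11 I M) (k : ℕ) (b : Bil I M) (X Y : VectorFieldOn I M) :
    (((-opR1 A) ^ k) b) X Y = ((-1 : ℤ) ^ k) • b ((A ^ k) X) Y := by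
  induction k generalizing X with
  | zero => simp
  | succ k ih =>
    rw [pow_succ', Module.End.mul_apply]
    show -((((-opR1 A) ^ k) b) (A X) Y) = _
    rw [ih]
    have : (A ^ k) (A X) = (A ^ (k + 1)) X := by
      rw [pow_succ, Module.End.mul_apply]
    rw [← this, pow_succ, mul_smul]
    simp

lemma negR2_pow (A : TensorField11 I M) (k : ℕ) (b : Bil I M) (X Y : VectorFieldOn I M) :
    (((-opR2 A) ^ k) b) X Y = ((-1 : ℤ) ^ k) • b X ((A ^ k) Y) := by
  induction k generalizing Y with
  | zero => simp
  | succ k ih =>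
    rw [pow_succ', Module.End.mul_apply]
    show -((((-opR2 A) ^ k) b) X (A Y)) = _
    rw [ih]
    have : (A ^ k) (A Y) = (A ^ (k + 1)) Y := by
      rw [pow_succ, Module.End.mul_apply]
    rw [← this, pow_succ, mul_smul]
    simp

lemma genNij_eq_op (A : TensorField11 I M) (m : ℕ) (X Y : VectorFieldOn I M) :
    genNijTorsion A m X Y =
      ((((opL A - opR1 A) * (opL A - opR2 A)) ^ m) (fun X Y => ⁅X, Y⁆)) X Y := by
  induction m generalizing X Y with
  | zero => simp [genNijTorsion]
  | succ m ih =>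
    rw [pow_succ', Module.End.mul_apply]
    set c := ((((opL A - opR1 A) * (opL A - opR2 A)) ^ m) (fun X Y => ⁅X, Y⁆)) with hc
    show genNijTorsion A (m + 1) X Y = (((opL A - opR1 A) * (opL A - opR2 A)) c) X Y
    have hNc : ∀ X Y : VectorFieldOn I M,
        (((opL A - opR1 A) * (opL A - opR2 A)) c) X Y
          = A (A (c X Y) - c X (A Y)) - (A (c (A X) Y) - c (A X) (A Y)) := by
      intro X Y
      rw [Module.End.mul_apply, LinearMap.sub_apply]
      have h2 : ∀ X Y : VectorFieldOn I M,
          ((opL A - opR2 A) c) X Y = A (c X Y) - c X (A Y) := by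
        intro X Y
        rw [LinearMap.sub_apply]
        rfl
      show A (((opL A - opR2 A) c) X Y) - ((opL A - opR2 A) c) (A X) Y = _
      rw [h2, h2]
    rw [hNc]
    show (A ^ 2) (genNijTorsion A m X Y) + genNijTorsion A m (A X) (A Y)
        - A (genNijTorsion A m X (A Y) + genNijTorsion A m (A X) Y) = _
    rw [ih, ih, ih, ih, map_sub, map_add, pow_two, Module.End.mul_apply]
    abel


/-- Closed formula for the generalized Nijenhuis torsion of level `m ≥ 1`:
`τ^{(m)}_A(X,Y) = Σ_{p,q=0}^m (−1)^{2m−p−q} C(m,p) C(m,q) A^{p+q}[A^{m−p}X, A^{m−q}Y]`. -/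
theorem genNijTorsion_closed_form (A : TensorField11 I M) (m : ℕ) (hm : 1 ≤ m)
    (X Y : VectorFieldOn I M) :
    genNijTorsion A m X Y =
      ∑ p ∈ Finset.range (m + 1), ∑ q ∈ Finset.range (m + 1),
        ((-1 : ℤ) ^ (2 * m - p - q) * (m.choose p) * (m.choose q)) •
          (A ^ (p + q)) ⁅(A ^ (m - p)) X, (A ^ (m - q)) Y⁆ := by
  have hLR1 : Commute (opL A) (opR1 A) := LinearMap.ext fun b => rfl
  have hLR2 : Commute (opL A) (opR2 A) := LinearMap.ext fun b => rfl
  have hR12 : Commute (opR1 A) (opR2 A) := LinearMap.ext fun b => rfl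
  have h12 : Commute (opL A - opR1 A) (opL A - opR2 A) :=
    ((Commute.refl (opL A)).sub_right hLR2).sub_left (hLR1.symm.sub_right hR12)
  rw [genNij_eq_op, h12.mul_pow, Module.End.mul_apply]
  rw [sub_eq_add_neg (opL A) (opR1 A), hLR1.neg_right.add_pow,
    sub_eq_add_neg (opL A) (opR2 A), hLR2.neg_right.add_pow]
  simp only [LinearMap.sum_apply, map_sum, Finset.sum_apply]
  rw [Finset.sum_comm]
  refine Finset.sum_congr rfl fun p hp => Finset.sum_congr rfl fun q hq => ?_
  simp only [Finset.mem_range] at hp hq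
  simp only [Module.End.mul_apply, Module.End.natCast_apply, Pi.smul_apply, map_nsmul,
    opL_pow, negR1_pow, negR2_pow, map_zsmul, Pi.smul_apply]
  rw [← Module.End.mul_apply (A ^ p), ← pow_add]
  simp only [← natCast_zsmul, smul_smul]
  congr 1
  have h1 : (m - p) + (m - q) = 2 * m - p - q := by omega
  rw [← h1, pow_add]
  ring
end
end

section
/- For every integer m ≥ 2, (1,1)-tensor field A, smooth functions f, g, and vector fields X, Y, the generalized Nijenhuis torsion of level m satisfies τ^{(m)}_{fA + gI}(X,Y) = f^{2m} τ^{(m)}_A(X,Y). -/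
open scoped Manifold

noncomputable section

set_option maxHeartbeats 1000000

variable {E : Type*} [NormedAddCommGroup E] [NormedSpace ℝ E]
  {H : Type*} [TopologicalSpace H] {I : ModelWithCorners ℝ E H}
  {M : Type*} [TopologicalSpace M] [ChartedSpace H M] [IsManifold I (⊤ : ℕ∞) M]

/-! ### Auxiliary machinery -/

namespace GenNijAux

local notation "R" => C^(⊤ : ℕ∞)⟮I, M; ℝ⟯
local notation "V" => VectorFieldOn I M

lemma lie_smul_right (h : R) (X Y : V) : ⁅X, h • Y⁆ = h • ⁅X, Y⁆ + (X h) • Y := by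
  ext a
  simp only [Derivation.commutator_apply, Derivation.add_apply, Derivation.smul_apply,
    Derivation.leibniz, smul_eq_mul]
  ring

lemma lie_smul_left (h : R) (X Y : V) : ⁅h • X, Y⁆ = h • ⁅X, Y⁆ - (Y h) • X := by
  ext a
  simp only [Derivation.commutator_apply, Derivation.sub_apply, Derivation.smul_apply,
    Derivation.leibniz, smul_eq_mul]
  ring

lemma lie_add_left (X X' Y : V) : ⁅X + X', Y⁆ = ⁅X, Y⁆ + ⁅X', Y⁆ := add_lie X X' Y

lemma lie_add_right (X Y Y' : V) : ⁅X, Y + Y'⁆ = ⁅X, Y⁆ + ⁅X, Y'⁆ := lie_add X Y Y'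

/-- The recursion operator defining the generalized torsions. -/
def Rop (A : TensorField11 I M) (T : V → V → V) : V → V → V := fun X Y =>
  A (A (T X Y)) + T (A X) (A Y) - A (T X (A Y) + T (A X) Y)

lemma genNij_succ (A : TensorField11 I M) (m : ℕ) (X Y : V) :
    genNijTorsion A (m + 1) X Y = Rop A (genNijTorsion A m) X Y := by
  show (A ^ 2) (genNijTorsion A m X Y) + _ - _ = _
  rw [Rop, pow_two, Module.End.mul_apply]

lemma genNij_zero (A : TensorField11 I M) (X Y : V) : genNijTorsion A 0 X Y = ⁅X, Y⁆ := rfl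

lemma genNij_one (A : TensorField11 I M) (X Y : V) :
    genNijTorsion A 1 X Y = A (A ⁅X, Y⁆) + ⁅A X, A Y⁆ - A ⁅X, A Y⁆ - A ⁅A X, Y⁆ := by
  rw [genNij_succ, Rop]
  show _ + _ - A (⁅X, A Y⁆ + ⁅A X, Y⁆) = _
  rw [map_add, genNij_zero, genNij_zero]
  abel

/-- `T` is a (2,1)-tensor: `C^∞`-bilinear. -/
structure IsTens (T : V → V → V) : Prop where
  smul_left : ∀ (h : R) X Y, T (h • X) Y = h • T X Y
  smul_right : ∀ (h : R) X Y, T X (h • Y) = h • T X Y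
  add_left : ∀ X X' Y, T (X + X') Y = T X Y + T X' Y
  add_right : ∀ X Y Y', T X (Y + Y') = T X Y + T X Y'

lemma isTens_nij (A : TensorField11 I M) : IsTens (I := I) (genNijTorsion A 1) := by
  constructor
  · intro h X Y
    simp only [genNij_one, map_smul, lie_smul_left, lie_smul_right, map_add, map_sub,
      smul_add, smul_sub]
    module
  · intro h X Y
    simp only [genNij_one, map_smul, lie_smul_left, lie_smul_right, map_add, map_sub,
      smul_add, smul_sub]
    module
  · intro X X' Y
    simp only [genNij_one, map_add, lie_add_left, lie_add_right]
    abel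
  · intro X Y Y'
    simp only [genNij_one, map_add, lie_add_left, lie_add_right]
    abel

lemma isTens_Rop (A : TensorField11 I M) {T : V → V → V} (hT : IsTens (I := I) T) :
    IsTens (I := I) (Rop A T) := by
  constructor
  · intro h X Y
    simp only [Rop, map_smul, map_add, hT.smul_left, hT.smul_right, smul_add, smul_sub]
  · intro h X Y
    simp only [Rop, map_smul, map_add, hT.smul_left, hT.smul_right, smul_add, smul_sub]
  · intro X X' Y
    simp only [Rop, map_add, hT.add_left, hT.add_right]
    abel
  · intro X Y Y'
    simp only [Rop, map_add, hT.add_left, hT.add_right]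
    abel

/-- Key algebraic lemma: for tensorial `T`, the recursion operator of `f • A + g • 1`
rescales that of `A` by `f ^ 2`. -/
lemma Rop_smul_add_id (A : TensorField11 I M) (f g : R) {T : V → V → V}
    (hT : IsTens (I := I) T) (X Y : V) :
    Rop (f • A + g • (1 : TensorField11 I M)) T X Y = f ^ 2 • Rop A T X Y := by
  have happ : ∀ Z : V, (f • A + g • (1 : TensorField11 I M)) Z = f • A Z + g • Z := by
    intro Z
    simp [LinearMap.add_apply, LinearMap.smul_apply, Module.End.one_apply]
  simp only [Rop, happ, hT.smul_left, hT.smul_right, hT.add_left, hT.add_right,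
    map_add, map_smul, smul_add, smul_sub, pow_two]
  module

/-- Pointwise linear combinations pass through `Rop`. -/
lemma Rop_comb (A : TensorField11 I M) (T S U : V → V → V) (c d : R) (X Y : V) :
    Rop A (fun X Y => c • T X Y + d • (S X Y + U X Y)) X Y
      = c • Rop A T X Y + d • (Rop A S X Y + Rop A U X Y) := by
  simp only [Rop, map_add, map_smul, smul_add, smul_sub]
  module

/-- The tensorial correction term appearing in the Nijenhuis torsion of `f • A + g • 1`. -/
def Wt (A P : TensorField11 I M) (h : R) : V → V → V := fun X Y =>
  (A X h) • P Y - (A Y h) • P X - (X h) • A (P Y) + (Y h) • A (P X)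

lemma isTens_Wt (A P : TensorField11 I M) (h : R) : IsTens (I := I) (Wt A P h) := by
  constructor
  · intro k X Y
    simp only [Wt, map_smul, Derivation.smul_apply, smul_eq_mul, smul_smul, smul_sub, smul_add]
    module
  · intro k X Y
    simp only [Wt, map_smul, Derivation.smul_apply, smul_eq_mul, smul_smul, smul_sub, smul_add]
    module
  · intro X X' Y
    simp only [Wt, map_add, Derivation.add_apply, add_smul, smul_add]
    module
  · intro X Y Y'
    simp only [Wt, map_add, Derivation.add_apply, add_smul, smul_add]
    module

/-- The correction terms are annihilated by the recursion operator when `P` commutes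
with `A`. -/
lemma Rop_Wt (A P : TensorField11 I M) (h : R) (hAP : ∀ Z : V, A (P Z) = P (A Z))
    (X Y : V) : Rop A (Wt A P h) X Y = 0 := by
  simp only [Rop, Wt, map_add, map_sub, map_smul, hAP, smul_sub, smul_add]
  module

/-- The Nijenhuis torsion of `f • A + g • 1`. -/
lemma nij_smul_add_id (A : TensorField11 I M) (f g : R) (X Y : V) :
    genNijTorsion (f • A + g • (1 : TensorField11 I M)) 1 X Y
      = f ^ 2 • genNijTorsion A 1 X Y + f • (Wt A A f X Y + Wt A 1 (I := I) g X Y) := by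
  have happ : ∀ Z : V, (f • A + g • (1 : TensorField11 I M)) Z = f • A Z + g • Z := by
    intro Z
    simp [LinearMap.add_apply, LinearMap.smul_apply, Module.End.one_apply]
  rw [genNij_one]
  simp only [happ, genNij_one, Wt, lie_add_left, lie_add_right, lie_smul_right, lie_smul_left,
    Derivation.smul_apply, Derivation.add_apply, smul_eq_mul, Module.End.one_apply,
    map_add, map_sub, map_smul, smul_add, smul_sub, smul_smul, pow_two]
  module

lemma isTens_genNij (A : TensorField11 I M) (m : ℕ) (hm : 1 ≤ m) :
    IsTens (I := I) (genNijTorsion A m) := by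
  induction m with
  | zero => omega
  | succ m ih =>
    rcases Nat.lt_or_ge m 1 with h | h
    · have : m = 0 := by omega
      subst this
      exact isTens_nij A
    · have : IsTens (I := I) (genNijTorsion A m) := ih h
      have heq : genNijTorsion A (m + 1) = Rop A (genNijTorsion A m) := by
        funext X Y; exact genNij_succ A m X Y
      rw [heq]
      exact isTens_Rop A this

end GenNijAux

open GenNijAux in
/-- For `m ≥ 2`, `τ^{(m)}_{fA + gI}(X,Y) = f^{2m} τ^{(m)}_A(X,Y)` for all smooth
functions `f, g`. -/
theorem genNijTorsion_smul_add_id (m : ℕ) (hm : 2 ≤ m) (A : TensorField11 I M)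
    (f g : C^(⊤ : ℕ∞)⟮I, M; ℝ⟯) (X Y : VectorFieldOn I M) :
    genNijTorsion (f • A + g • (1 : TensorField11 I M)) m X Y =
      f ^ (2 * m) • genNijTorsion A m X Y := by
  induction m, hm using Nat.le_induction generalizing X Y with
  | base =>
    have h1 : genNijTorsion (f • A + g • (1 : TensorField11 I M)) 1 = fun X Y =>
        f ^ 2 • genNijTorsion A 1 X Y + f • (Wt A A f X Y + Wt A 1 (I := I) g X Y) := by
      funext X Y; exact nij_smul_add_id A f g X Y
    rw [genNij_succ, h1,
      Rop_comb (f • A + g • (1 : TensorField11 I M)) (genNijTorsion A 1) (Wt A A f)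
        (Wt A 1 g) (f ^ 2) f X Y,
      Rop_smul_add_id A f g (isTens_nij A) X Y,
      Rop_smul_add_id A f g (isTens_Wt A A f) X Y,
      Rop_smul_add_id A f g (isTens_Wt A 1 g) X Y,
      Rop_Wt A A f (fun Z => rfl) X Y,
      Rop_Wt A 1 g (fun Z => by simp) X Y]
    simp only [smul_zero, add_zero, zero_add, smul_smul]
    rw [← pow_add, genNij_succ A 1 X Y]
  | succ m hm ih =>
    rw [genNij_succ]
    have hT := isTens_genNij A m (by omega)
    have hRw : Rop (f • A + g • (1 : TensorField11 I M))
          (genNijTorsion (f • A + g • (1 : TensorField11 I M)) m) X Y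
        = Rop (f • A + g • (1 : TensorField11 I M))
          (fun X Y => f ^ (2 * m) • genNijTorsion A m X Y) X Y := by
      simp only [Rop]
      rw [ih X Y, ih _ _, ih _ _, ih _ _]
    rw [hRw]
    have hpull : Rop (f • A + g • (1 : TensorField11 I M))
          (fun X Y => f ^ (2 * m) • genNijTorsion A m X Y) X Y
        = f ^ (2 * m) • Rop (f • A + g • (1 : TensorField11 I M)) (genNijTorsion A m) X Y := by
      simp only [Rop, map_add, map_smul, smul_add, smul_sub]
    rw [hpull, Rop_smul_add_id A f g hT X Y, smul_smul, ← pow_add, ← genNij_succ A m X Y]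
    ring_nf
end
end

section
/- The Haantjes torsion of a scalar multiple satisfies H_{fA}(X,Y) = f⁴ H_A(X,Y) for every smooth function f, (1,1)-tensor field A, and vector fields X,Y. -/
open scoped Manifold

noncomputable section

variable {E : Type*} [NormedAddCommGroup E] [NormedSpace ℝ E]
  {H : Type*} [TopologicalSpace H] {I : ModelWithCorners ℝ E H}
  {M : Type*} [TopologicalSpace M] [ChartedSpace H M] [IsManifold I (⊤ : ℕ∞) M]

lemma bracket_smul_right (g : C^(⊤ : ℕ∞)⟮I, M; ℝ⟯) (X Y : VectorFieldOn I M) :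
    ⁅X, g • Y⁆ = g • ⁅X, Y⁆ + (X g) • Y := by
  ext a
  simp only [Derivation.commutator_apply, Derivation.smul_apply, Derivation.add_apply,
    Derivation.leibniz, smul_eq_mul]
  ring_nf

lemma bracket_smul_left (g : C^(⊤ : ℕ∞)⟮I, M; ℝ⟯) (X Y : VectorFieldOn I M) :
    ⁅g • X, Y⁆ = g • ⁅X, Y⁆ - (Y g) • X := by
  ext a
  simp only [Derivation.commutator_apply, Derivation.smul_apply, Derivation.sub_apply,
    Derivation.leibniz, smul_eq_mul]
  ring_nf

/-- The Haantjes torsion of `A`. -/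
def haantjesTorsion (A : TensorField11 I M) (X Y : VectorFieldOn I M) : VectorFieldOn I M :=
  (A ^ 2) (nijTorsion A X Y) + nijTorsion A (A X) (A Y)
    - A (nijTorsion A X (A Y) + nijTorsion A (A X) Y)

set_option maxHeartbeats 4000000 in
/-- The Haantjes torsion satisfies `H_{fA}(X,Y) = f⁴ H_A(X,Y)`. -/
theorem haantjesTorsion_smul_fun (f : C^(⊤ : ℕ∞)⟮I, M; ℝ⟯) (A : TensorField11 I M)
    (X Y : VectorFieldOn I M) :
    haantjesTorsion (f • A) X Y = f ^ 4 • haantjesTorsion A X Y := by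
  simp only [haantjesTorsion, nijTorsion, pow_two, Module.End.mul_apply,
    LinearMap.smul_apply, map_smul, map_add, map_sub, bracket_smul_left, bracket_smul_right,
    smul_add, smul_sub, smul_smul, Derivation.smul_apply, Derivation.leibniz, smul_eq_mul]
  module
end
end

section
/- Evaluating the polarization of level m on 2m copies of the same operator recovers the generalized Nijenhuis torsion up to a factorial factor: P^{(m)}(A,…,A)(X,Y) = (2m)! τ^{(m)}_A(X,Y). -/
open scoped Manifold

section AuxComb
open Finset fwdDiff

lemma fwdDiff_pow_eval (n : ℕ) : ∀ j ≤ n, ∀ y : ℕ,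
    (fwdDiff (1:ℕ))^[n] (fun x : ℕ => (x : ℤ) ^ j) y = if j = n then (n.factorial : ℤ) else 0 := by
  induction n with
  | zero => intro j hj y; interval_cases j; simp
  | succ n IH =>
    intro j hj y
    rw [Function.iterate_succ_apply]
    have hΔ : fwdDiff (1:ℕ) (fun x : ℕ => (x : ℤ) ^ j) =
        ∑ i ∈ range j, (j.choose i : ℤ) • (fun x : ℕ => (x : ℤ) ^ i) := by
      funext x
      simp only [fwdDiff, Finset.sum_apply, Pi.smul_apply, smul_eq_mul]
      have hx : ((x + 1 : ℕ) : ℤ) = (x : ℤ) + 1 := by push_cast; ring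
      rw [hx, add_pow, Finset.sum_range_succ]
      simp [mul_comm]
    rw [hΔ, fwdDiff_iter_finset_sum, Finset.sum_apply]
    simp only [fwdDiff_iter_const_smul, Pi.smul_apply, smul_eq_mul]
    rcases eq_or_lt_of_le hj with hj | hj
    · subst hj
      rw [Finset.sum_eq_single n]
      · rw [IH n le_rfl y, if_pos rfl, if_pos rfl]
        rw [Nat.choose_succ_self_right, Nat.factorial_succ]
        push_cast; ring
      · intro i hi hne
        simp only [Finset.mem_range] at hi
        rw [IH i (by omega) y, if_neg hne, mul_zero]
      · intro h; exact absurd (Finset.self_mem_range_succ n) h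
    · have hj' : j ≤ n := by omega
      rw [if_neg (by omega), Finset.sum_eq_zero]
      intro i hi
      simp only [Finset.mem_range] at hi
      rw [IH i (by omega) y, if_neg (by omega), mul_zero]

lemma alt_sum_factorial (n : ℕ) :
    ∑ k ∈ range (n + 1), (-1 : ℤ) ^ (n - k) * (n.choose k : ℤ) * (k : ℤ) ^ n
      = (n.factorial : ℤ) := by
  have h := fwdDiff_iter_eq_sum_shift (1 : ℕ) (fun x : ℕ => (x : ℤ) ^ n) n 0
  rw [fwdDiff_pow_eval n n le_rfl 0, if_pos rfl] at h
  rw [h]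
  apply Finset.sum_congr rfl
  intro k hk
  simp [smul_eq_mul, mul_assoc]

end AuxComb

section AuxLists
open Finset
variable {α : Type*} {V : Type*} [AddCommMonoid V]

lemma sum_map_filter_of_zero (p : α → Bool) (f : α → V) (l : List α)
    (h : ∀ x ∈ l, p x = false → f x = 0) :
    ((l.filter p).map f).sum = (l.map f).sum := by
  induction l with
  | nil => simp
  | cons a l ih =>
    have ih' := ih fun x hx => h x (List.mem_cons_of_mem _ hx)
    by_cases hp : p a
    · simp [List.filter_cons, hp, ih']
    · simp only [Bool.not_eq_true] at hp
      simp [List.filter_cons, hp, ih', h a List.mem_cons_self hp]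

lemma binom_step (n : ℕ) (g : ℕ → V) :
    ∑ k ∈ range (n + 1), n.choose k • g k + ∑ k ∈ range (n + 1), n.choose k • g (k + 1)
      = ∑ k ∈ range (n + 2), (n + 1).choose k • g k := by
  rw [Finset.sum_range_succ' (fun k => (n + 1).choose k • g k) (n + 1)]
  simp only [Nat.choose_succ_succ, add_smul, Finset.sum_add_distrib, Nat.choose_zero_right,
    one_smul]
  rw [Finset.sum_range_succ' (fun k => n.choose k • g k) n]
  rw [Finset.sum_range_succ (fun k => n.choose (k + 1) • g (k + 1)) n]
  simp only [Nat.choose_succ_self, zero_smul, add_zero, Nat.choose_zero_right, one_smul]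
  abel

lemma sum_map_sublists_replicate (a : α) (n : ℕ) (g : ℕ → V) :
    (((List.replicate n a).sublists).map fun s => g s.length).sum
      = ∑ k ∈ Finset.range (n + 1), (n.choose k) • g k := by
  induction n generalizing g with
  | zero => simp
  | succ n IH =>
    rw [List.replicate_succ', List.sublists_concat, List.map_append, List.sum_append,
      List.map_map]
    have : ((fun s : List α => g s.length) ∘ fun x => x ++ [a])
        = fun s : List α => g (s.length + 1) := by
      funext s; simp
    rw [this, IH g, IH (fun k => g (k + 1)), binom_step]

end AuxLists

noncomputable section

variable {E : Type*} [NormedAddCommGroup E] [NormedSpace ℝ E]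
  {H : Type*} [TopologicalSpace H] {I : ModelWithCorners ℝ E H}
  {M : Type*} [TopologicalSpace M] [ChartedSpace H M] [IsManifold I (⊤ : ℕ∞) M]

/-- The defect of index `l.length` of the generalized Nijenhuis torsion of level `m`:
the alternating sum, over all nonempty subsets of the arguments, of the generalized
Nijenhuis torsion of the corresponding sums. (Subsets of indices of the list `l`
correspond to sublists of `l`.) -/
def defect (m : ℕ) (l : List (TensorField11 I M)) (X Y : VectorFieldOn I M) :
    VectorFieldOn I M :=
  ((l.sublists.filter fun s => !s.isEmpty).map fun s =>
    ((-1 : ℤ) ^ (l.length - s.length)) • genNijTorsion s.sum m X Y).sum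

lemma gen_nsmul_left (A : TensorField11 I M) (m k : ℕ) :
    ∀ X Y : VectorFieldOn I M,
      genNijTorsion A m (k • X) Y = k • genNijTorsion A m X Y := by
  induction m with
  | zero => intro X Y; exact nsmul_lie X Y k
  | succ m IH =>
    intro X Y
    simp only [genNijTorsion, IH, ← smul_add, map_nsmul, smul_sub]

lemma gen_nsmul_right (A : TensorField11 I M) (m k : ℕ) :
    ∀ X Y : VectorFieldOn I M,
      genNijTorsion A m X (k • Y) = k • genNijTorsion A m X Y := by
  induction m with
  | zero => intro X Y; exact lie_nsmul X Y k
  | succ m IH =>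
    intro X Y
    simp only [genNijTorsion, IH, ← smul_add, map_nsmul, smul_sub]

lemma gen_nsmul_op (A : TensorField11 I M) (m k : ℕ) :
    ∀ X Y : VectorFieldOn I M,
      genNijTorsion (k • A) m X Y = k ^ (2 * m) • genNijTorsion A m X Y := by
  induction m with
  | zero => intro X Y; simp [genNijTorsion]
  | succ m IH =>
    intro X Y
    simp only [genNijTorsion, IH, LinearMap.smul_apply, pow_two, Module.End.mul_apply,
      gen_nsmul_left, gen_nsmul_right, smul_smul, ← smul_add, map_nsmul, smul_sub]
    congr 2 <;> ring

/-- The polarization of level `m` on `2m` copies of `A` recovers the generalized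
Nijenhuis torsion: `P^{(m)}(A,…,A)(X,Y) = (2m)! τ^{(m)}_A(X,Y)`. -/
theorem polarization_diag (m : ℕ) (hm : 1 ≤ m) (A : TensorField11 I M)
    (X Y : VectorFieldOn I M) :
    defect m (List.replicate (2 * m) A) X Y = (2 * m).factorial • genNijTorsion A m X Y := by
  classical
  set n := 2 * m with hn
  set τ : VectorFieldOn I M := genNijTorsion A m X Y with hτ
  set g : ℕ → VectorFieldOn I M :=
    fun k => ((-1 : ℤ) ^ (n - k)) • ((k ^ n : ℕ) • τ) with hg
  have hnm : n ≠ 0 := by omega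
  unfold defect
  rw [sum_map_filter_of_zero]
  · have hl : ∀ s ∈ (List.replicate n A).sublists,
        (((-1 : ℤ) ^ ((List.replicate n A).length - s.length)) • genNijTorsion s.sum m X Y)
          = g s.length := by
      intro s hs
      have hsub : s.Sublist (List.replicate n A) := List.mem_sublists.mp hs
      have hsum : s.sum = s.length • A :=
        List.sum_eq_card_nsmul s A fun b hb => List.eq_of_mem_replicate (hsub.subset hb)
      rw [hsum, gen_nsmul_op, List.length_replicate, hg]
    rw [List.map_congr_left hl, sum_map_sublists_replicate A n g]
    have hterm : ∀ k, (n.choose k) • g k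
        = ((-1 : ℤ) ^ (n - k) * (n.choose k : ℤ) * (k : ℤ) ^ n) • τ := by
      intro k
      simp only [hg]
      rw [← natCast_zsmul τ (k ^ n), smul_smul, ← natCast_zsmul _ (n.choose k), smul_smul]
      push_cast
      ring_nf
    simp only [hterm]
    rw [← Finset.sum_smul, alt_sum_factorial n, natCast_zsmul]
  · intro s hs hfalse
    have hsempty : s = [] := by
      simpa using hfalse
    subst hsempty
    have h0 : ([] : List (TensorField11 I M)).sum = (0 : ℕ) • A := by simp
    rw [h0, gen_nsmul_op]
    rw [zero_pow (by omega : 2 * m ≠ 0)]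
    simp

end
end

section
/- For generalized Nijenhuis operators A, B of level m (i.e. τ^{(m)}_A = τ^{(m)}_B = 0) and real constants λ, μ, the identity τ^{(m)}_{λA+μB}(X,Y) = (1/(2m)!) Σ_{k=1}^{2m−1} binom(2m,k) λ^{2m−k} μ^k P^{(m)}(A,…,A,B,…,B)(X,Y) holds (with 2m−k copies of A and k copies of B); consequently A and B generate a Haantjes vector space of level m (τ^{(m)}_{λA+μB} = 0 for all λ,μ ∈ ℝ) if and only if the 2m−1 conditions P^{(m)}(A,…,A,B,…,B)(X,Y) = 0 for k = 1,…,2m−1 hold for all vector fields X,Y. -/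
open scoped Manifold

noncomputable section

variable {E : Type*} [NormedAddCommGroup E] [NormedSpace ℝ E]
  {H : Type*} [TopologicalSpace H] {I : ModelWithCorners ℝ E H}
  {M : Type*} [TopologicalSpace M] [ChartedSpace H M] [IsManifold I (⊤ : ℕ∞) M]

set_option maxHeartbeats 1000000
set_option synthInstance.maxHeartbeats 400000
section HVSAuxSection
namespace HVSAux


/-- alternating binomial moment sum -/
noncomputable def Sa (n k : ℕ) : ℝ :=
  ∑ i ∈ Finset.range (n + 1), (-1 : ℝ) ^ (n - i) * (n.choose i) * (i : ℝ) ^ k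

lemma Sa_succ (n k : ℕ) :
    Sa (n + 1) k = ∑ t ∈ Finset.range k, (k.choose t : ℝ) * Sa n t := by
  have peel : Sa (n + 1) k
      = ∑ i ∈ Finset.range (n + 1),
          (-1 : ℝ) ^ (n - i) * ((n.choose i : ℝ) + (n.choose (i+1) : ℝ)) * ((i : ℝ) + 1) ^ k
        + (-1 : ℝ) ^ (n + 1) * (0 : ℝ) ^ k := by
    rw [Sa, Finset.sum_range_succ'
      (fun i => (-1 : ℝ) ^ (n + 1 - i) * ((n+1).choose i) * (i : ℝ) ^ k)]
    congr 1
    · refine Finset.sum_congr rfl fun i _ => ?_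
      rw [Nat.succ_sub_succ, Nat.choose_succ_succ]
      push_cast
      ring
    · simp
  have claim2 : ∑ i ∈ Finset.range (n + 1),
      (-1 : ℝ) ^ (n - i) * (n.choose (i+1) : ℝ) * ((i : ℝ) + 1) ^ k
      + (-1 : ℝ) ^ (n + 1) * (0 : ℝ) ^ k = -Sa n k := by
    have : -Sa n k = ∑ j ∈ Finset.range (n + 1),
        -((-1 : ℝ) ^ (n - j) * (n.choose j) * (j : ℝ) ^ k) := by
      rw [Sa, ← Finset.sum_neg_distrib]
    rw [this, Finset.sum_range_succ'
      (fun j => -((-1 : ℝ) ^ (n - j) * (n.choose j) * (j : ℝ) ^ k))]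
    rw [Finset.sum_range_succ
      (fun i => (-1 : ℝ) ^ (n - i) * (n.choose (i+1) : ℝ) * ((i : ℝ) + 1) ^ k)]
    have h1 : ∀ j ∈ Finset.range n,
        -((-1 : ℝ) ^ (n - (j+1)) * (n.choose (j+1)) * ((j+1 : ℕ) : ℝ) ^ k)
        = (-1 : ℝ) ^ (n - j) * (n.choose (j+1) : ℝ) * ((j : ℝ) + 1) ^ k := by
      intro j hj
      rw [Finset.mem_range] at hj
      have : n - j = (n - (j+1)) + 1 := by omega
      rw [this]
      push_cast
      ring
    rw [Finset.sum_congr rfl h1]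
    simp [Nat.choose_succ_self]
    ring
  have claim3 : ∑ i ∈ Finset.range (n + 1),
      (-1 : ℝ) ^ (n - i) * (n.choose i : ℝ) * ((i : ℝ) + 1) ^ k
      = ∑ t ∈ Finset.range (k + 1), (k.choose t : ℝ) * Sa n t := by
    have hp : ∀ i : ℕ, ((i : ℝ) + 1) ^ k
        = ∑ t ∈ Finset.range (k + 1), (i : ℝ) ^ t * (k.choose t : ℝ) := by
      intro i
      have := add_pow (i : ℝ) 1 k
      simpa using this
    calc ∑ i ∈ Finset.range (n + 1),
          (-1 : ℝ) ^ (n - i) * (n.choose i : ℝ) * ((i : ℝ) + 1) ^ k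
        = ∑ i ∈ Finset.range (n + 1), ∑ t ∈ Finset.range (k + 1),
            (k.choose t : ℝ) * ((-1 : ℝ) ^ (n - i) * (n.choose i : ℝ) * (i : ℝ) ^ t) := by
          refine Finset.sum_congr rfl fun i _ => ?_
          rw [hp i, Finset.mul_sum]
          exact Finset.sum_congr rfl fun t _ => by ring
      _ = ∑ t ∈ Finset.range (k + 1), (k.choose t : ℝ) * Sa n t := by
          rw [Finset.sum_comm]
          exact Finset.sum_congr rfl fun t _ => by rw [Sa, Finset.mul_sum]
  have expand : ∀ i ∈ Finset.range (n+1),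
      (-1 : ℝ) ^ (n - i) * ((n.choose i : ℝ) + (n.choose (i+1) : ℝ)) * ((i : ℝ) + 1) ^ k
      = (-1 : ℝ) ^ (n - i) * (n.choose i : ℝ) * ((i : ℝ) + 1) ^ k
        + (-1 : ℝ) ^ (n - i) * (n.choose (i+1) : ℝ) * ((i : ℝ) + 1) ^ k :=
    fun i _ => by ring
  rw [peel, Finset.sum_congr rfl expand, Finset.sum_add_distrib, add_assoc, claim2, claim3,
    Finset.sum_range_succ]
  simp

lemma Sa_eq_zero : ∀ {n k : ℕ}, k < n → Sa n k = 0 := by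
  intro n
  induction n with
  | zero => intro k hk; omega
  | succ n ih =>
    intro k hk
    rw [Sa_succ]
    refine Finset.sum_eq_zero fun t ht => ?_
    rw [Finset.mem_range] at ht
    rw [ih (by omega), mul_zero]

lemma Sa_diag (n : ℕ) : Sa n n = (n.factorial : ℝ) := by
  induction n with
  | zero => simp [Sa]
  | succ n ih =>
    rw [Sa_succ, Finset.sum_range_succ]
    rw [Finset.sum_eq_zero fun t ht => by
      rw [Finset.mem_range] at ht
      rw [Sa_eq_zero ht, mul_zero]]
    rw [ih, zero_add, Nat.choose_succ_self_right]
    push_cast [Nat.factorial_succ]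
    ring

/-- Pascal recursion for weighted sums. -/
lemma pascal_sum {β : Type*} [AddCommMonoid β] (p : ℕ) (G : ℕ → β) :
    ∑ i ∈ Finset.range (p + 2), (p + 1).choose i • G i
      = ∑ i ∈ Finset.range (p + 1), p.choose i • G i
        + ∑ i ∈ Finset.range (p + 1), p.choose i • G (i + 1) := by
  rw [Finset.sum_range_succ' (fun i => (p + 1).choose i • G i)]
  simp only [Nat.choose_succ_succ, add_smul, Finset.sum_add_distrib, Nat.choose_zero_right,
    one_smul]
  have h1 : ∑ i ∈ Finset.range (p + 1), p.choose i • G i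
      = ∑ i ∈ Finset.range p, p.choose (i + 1) • G (i + 1) + G 0 := by
    rw [Finset.sum_range_succ' (fun i => p.choose i • G i)]
    simp
  have h2 : ∑ i ∈ Finset.range (p + 1), p.choose (i + 1) • G (i + 1)
      = ∑ i ∈ Finset.range p, p.choose (i + 1) • G (i + 1) := by
    rw [Finset.sum_range_succ]
    simp
  rw [h1, h2]
  abel

/-- Sum over sublists' of `replicate p a ++ r`. -/
lemma sum_sublists'_replicate_append {α β : Type*} [AddCommMonoid α] [AddCommMonoid β] :
    ∀ (p : ℕ) (hfun : ℕ → α → β) (a : α) (r : List α),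
    (((List.replicate p a ++ r).sublists').map fun s => hfun s.length s.sum).sum
      = ∑ i ∈ Finset.range (p + 1), p.choose i •
          ((r.sublists'.map fun s => hfun (i + s.length) (i • a + s.sum)).sum) := by
  intro p
  induction p with
  | zero => intro hfun a r; simp
  | succ p ih =>
    intro hfun a r
    have : List.replicate (p + 1) a ++ r = a :: (List.replicate p a ++ r) := by
      simp [List.replicate_succ]
    rw [this, List.sublists'_cons, List.map_append, List.sum_append, List.map_map]
    have hcomp : ((fun s => hfun s.length s.sum) ∘ (List.cons a))
        = fun s : List α => hfun (s.length + 1) (a + s.sum) := by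
      funext s; simp [Function.comp]
    rw [hcomp, ih, ih (fun n x => hfun (n + 1) (a + x))]
    have key : ∀ i, ((List.map (fun s => hfun (i + s.length + 1) (a + (i • a + s.sum)))
          r.sublists')).sum
        = ((List.map (fun s => hfun ((i+1) + s.length) ((i+1) • a + s.sum)) r.sublists')).sum := by
      intro i
      congr 1
      refine List.map_congr_left fun s _ => ?_
      rw [succ_nsmul' a i]
      congr 1
      · omega
      · rw [add_assoc]
    simp only [key]
    rw [← pascal_sum p (fun i => (List.map (fun s => hfun (i + s.length) (i • a + s.sum))
      r.sublists').sum)]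

/-- Sum of map over filtered list when function vanishes off the filter. -/
lemma sum_map_filter_eq {α β : Type*} [AddCommMonoid β] (l : List α) (p : α → Bool) (f : α → β)
    (h : ∀ x, p x = false → f x = 0) : ((l.filter p).map f).sum = (l.map f).sum := by
  induction l with
  | nil => simp
  | cons a t ih =>
    rw [List.filter_cons]
    by_cases hp : p a
    · simp [hp, ih]
    · simp only [Bool.not_eq_true] at hp
      simp [hp, ih, h a hp]



/-- the pencil operator -/
def Sop (A B : TensorField11 I M) (lam mu : ℝ) : TensorField11 I M :=
  algebraMap ℝ (C^(⊤ : ℕ∞)⟮I, M; ℝ⟯) lam • A + algebraMap ℝ (C^(⊤ : ℕ∞)⟮I, M; ℝ⟯) mu • B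

lemma Sop_apply (A B : TensorField11 I M) (lam mu : ℝ) (x : VectorFieldOn I M) :
    Sop A B lam mu x = lam • A x + mu • B x := by
  simp [Sop, algebraMap_smul]

/-- `F` is a bihomogeneous polynomial function of degree `n`. -/
def IsHom (n : ℕ) (F : ℝ → ℝ → VectorFieldOn I M) : Prop :=
  ∃ c : ℕ → VectorFieldOn I M,
    ∀ l μ : ℝ, F l μ = ∑ k ∈ Finset.range (n + 1), (l ^ k * μ ^ (n - k)) • c k

lemma IsHom.congr {n : ℕ} {F G : ℝ → ℝ → VectorFieldOn I M} (h : IsHom n F)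
    (e : ∀ l μ, F l μ = G l μ) : IsHom n G := by
  obtain ⟨c, hc⟩ := h
  exact ⟨c, fun l μ => (e l μ) ▸ hc l μ⟩

lemma IsHom.cast {n n' : ℕ} {F : ℝ → ℝ → VectorFieldOn I M} (h : IsHom n F) (e : n = n') :
    IsHom n' F := e ▸ h

lemma isHom_const (v : VectorFieldOn I M) : IsHom 0 (fun _ _ => v) :=
  ⟨fun _ => v, fun l μ => by simp⟩

lemma IsHom.add {n : ℕ} {F G : ℝ → ℝ → VectorFieldOn I M} (hF : IsHom n F) (hG : IsHom n G) :
    IsHom n (fun l μ => F l μ + G l μ) := by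
  obtain ⟨c, hc⟩ := hF; obtain ⟨d, hd⟩ := hG
  exact ⟨fun k => c k + d k, fun l μ => by
    simp [hc, hd, smul_add, Finset.sum_add_distrib]⟩

lemma IsHom.sub {n : ℕ} {F G : ℝ → ℝ → VectorFieldOn I M} (hF : IsHom n F) (hG : IsHom n G) :
    IsHom n (fun l μ => F l μ - G l μ) := by
  obtain ⟨c, hc⟩ := hF; obtain ⟨d, hd⟩ := hG
  exact ⟨fun k => c k - d k, fun l μ => by
    simp [hc, hd, smul_sub, Finset.sum_sub_distrib]⟩

lemma my_sum_lie {L : Type*} [LieRing L] {ι : Type*} (s : Finset ι) (f : ι → L) (x : L) :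
    ⁅∑ i ∈ s, f i, x⁆ = ∑ i ∈ s, ⁅f i, x⁆ :=
  map_sum (AddMonoidHom.mk' (fun y => ⁅y, x⁆) (fun a b => add_lie a b x)) f s

lemma my_lie_sum {L : Type*} [LieRing L] {ι : Type*} (s : Finset ι) (f : ι → L) (x : L) :
    ⁅x, ∑ i ∈ s, f i⁆ = ∑ i ∈ s, ⁅x, f i⁆ :=
  map_sum (AddMonoidHom.mk' (fun y => ⁅x, y⁆) (fun a b => lie_add x a b)) f s

lemma IsHom.apply {n : ℕ} {F : ℝ → ℝ → VectorFieldOn I M} (A B : TensorField11 I M)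
    (hF : IsHom n F) : IsHom (n + 1) (fun l μ => Sop A B l μ (F l μ)) := by
  obtain ⟨c, hc⟩ := hF
  refine ⟨fun k => (if k = 0 then 0 else A (c (k - 1))) + (if n + 1 ≤ k then 0 else B (c k)),
    fun l μ => ?_⟩
  simp only [hc, map_sum, LinearMap.map_smul_of_tower, Sop_apply, smul_add,
    Finset.sum_add_distrib]
  congr 1
  · -- A part
    rw [Finset.sum_range_succ' (fun k => (l ^ k * μ ^ (n + 1 - k)) •
      if k = 0 then (0 : VectorFieldOn I M) else A (c (k - 1)))]
    norm_num [Nat.succ_sub_succ]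
    refine Finset.sum_congr rfl fun k _ => ?_
    rw [smul_smul, show l ^ k * μ ^ (n - k) * l = l ^ (k + 1) * μ ^ (n - k) from by ring]
  · -- B part
    rw [Finset.sum_range_succ (fun k => (l ^ k * μ ^ (n + 1 - k)) •
      if n + 1 ≤ k then (0 : VectorFieldOn I M) else B (c k))]
    simp only [if_pos (le_refl (n + 1)), smul_zero, add_zero]
    refine Finset.sum_congr rfl fun k hk => ?_
    rw [Finset.mem_range] at hk
    rw [if_neg (by omega), smul_smul, show n + 1 - k = (n - k) + 1 from by omega,
      show l ^ k * μ ^ (n - k) * μ = l ^ k * μ ^ (n - k + 1) from by ring]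

lemma IsHom.bracket {n p : ℕ} {F G : ℝ → ℝ → VectorFieldOn I M}
    (hF : IsHom n F) (hG : IsHom p G) :
    IsHom (n + p) (fun l μ => ⁅F l μ, G l μ⁆) := by
  obtain ⟨c, hc⟩ := hF; obtain ⟨d, hd⟩ := hG
  refine ⟨fun t => ∑ k ∈ Finset.range (n + 1), ∑ j ∈ Finset.range (p + 1),
    if k + j = t then ⁅c k, d j⁆ else 0, fun l μ => ?_⟩
  simp only [hc, hd]
  rw [my_sum_lie]
  calc ∑ k ∈ Finset.range (n + 1), ⁅(l ^ k * μ ^ (n - k)) • c k,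
        ∑ j ∈ Finset.range (p + 1), (l ^ j * μ ^ (p - j)) • d j⁆
      = ∑ k ∈ Finset.range (n + 1), ∑ j ∈ Finset.range (p + 1),
          (l ^ (k + j) * μ ^ ((n + p) - (k + j))) • ⁅c k, d j⁆ := by
        refine Finset.sum_congr rfl fun k hk => ?_
        rw [my_lie_sum]
        refine Finset.sum_congr rfl fun j hj => ?_
        rw [Finset.mem_range] at hk hj
        rw [smul_lie (l ^ k * μ ^ (n - k)) (c k) ((l ^ j * μ ^ (p - j)) • d j),
          lie_smul (l ^ j * μ ^ (p - j)) (c k) (d j), smul_smul,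
          show l ^ k * μ ^ (n - k) * (l ^ j * μ ^ (p - j))
            = l ^ (k + j) * μ ^ ((n - k) + (p - j)) from by rw [pow_add, pow_add]; ring,
          show (n - k) + (p - j) = (n + p) - (k + j) from by omega]
    _ = ∑ k ∈ Finset.range (n + 1), ∑ j ∈ Finset.range (p + 1),
          ∑ t ∈ Finset.range (n + p + 1),
            (l ^ t * μ ^ ((n + p) - t)) • if k + j = t then ⁅c k, d j⁆ else 0 := by
        refine Finset.sum_congr rfl fun k hk => Finset.sum_congr rfl fun j hj => ?_
        rw [Finset.mem_range] at hk hj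
        have h1 : ∀ t ∈ Finset.range (n + p + 1),
            (l ^ t * μ ^ ((n + p) - t)) • (if k + j = t then ⁅c k, d j⁆ else 0)
            = if t = k + j then (l ^ t * μ ^ ((n + p) - t)) • ⁅c k, d j⁆ else 0 := by
          intro t _
          by_cases h : k + j = t
          · rw [if_pos h, if_pos h.symm]
          · rw [if_neg h, if_neg (Ne.symm h), smul_zero]
        have h2 : ∑ t ∈ Finset.range (n + p + 1),
            (l ^ t * μ ^ ((n + p) - t)) • (if k + j = t then ⁅c k, d j⁆ else 0)
            = (l ^ (k + j) * μ ^ ((n + p) - (k + j))) • ⁅c k, d j⁆ := by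
          rw [Finset.sum_congr rfl h1, Finset.sum_ite_eq' (Finset.range (n + p + 1)) (k + j)
            (fun t => (l ^ t * μ ^ ((n + p) - t)) • ⁅c k, d j⁆),
            if_pos (Finset.mem_range.mpr (by omega))]
        exact h2.symm
    _ = ∑ t ∈ Finset.range (n + p + 1), (l ^ t * μ ^ ((n + p) - t)) •
          ∑ k ∈ Finset.range (n + 1), ∑ j ∈ Finset.range (p + 1),
            if k + j = t then ⁅c k, d j⁆ else 0 := by
        have e1 : (∑ k ∈ Finset.range (n + 1), ∑ j ∈ Finset.range (p + 1),
            ∑ t ∈ Finset.range (n + p + 1), (l ^ t * μ ^ ((n + p) - t)) •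
              if k + j = t then ⁅c k, d j⁆ else 0)
            = ∑ t ∈ Finset.range (n + p + 1), ∑ k ∈ Finset.range (n + 1),
              ∑ j ∈ Finset.range (p + 1), (l ^ t * μ ^ ((n + p) - t)) •
                if k + j = t then ⁅c k, d j⁆ else 0 :=
          Eq.trans (Finset.sum_congr rfl fun k _ => Finset.sum_comm) Finset.sum_comm
        rw [e1]
        refine Finset.sum_congr rfl fun t _ => ?_
        rw [Finset.smul_sum]
        exact Finset.sum_congr rfl fun k _ => (Finset.smul_sum).symm

lemma isHom_genNij (A B : TensorField11 I M) :
    ∀ (m dG dH : ℕ) (G H : ℝ → ℝ → VectorFieldOn I M),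
    IsHom dG G → IsHom dH H →
    IsHom (2 * m + dG + dH) (fun l μ => genNijTorsion (Sop A B l μ) m (G l μ) (H l μ)) := by
  intro m
  induction m with
  | zero =>
    intro dG dH G H hG hH
    exact ((hG.bracket hH).cast (by omega)).congr (fun l μ => by simp [genNijTorsion])
  | succ m ih =>
    intro dG dH G H hG hH
    have hSG := IsHom.apply A B hG
    have hSH := IsHom.apply A B hH
    have t1 : IsHom (2 * m + dG + dH + 2) (fun l μ =>
        Sop A B l μ (Sop A B l μ (genNijTorsion (Sop A B l μ) m (G l μ) (H l μ)))) :=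
      (IsHom.apply A B (IsHom.apply A B (ih dG dH G H hG hH))).cast (by omega)
    have t2 : IsHom (2 * m + dG + dH + 2) (fun l μ =>
        genNijTorsion (Sop A B l μ) m (Sop A B l μ (G l μ)) (Sop A B l μ (H l μ))) :=
      (ih (dG + 1) (dH + 1) _ _ hSG hSH).cast (by omega)
    have t3 : IsHom (2 * m + dG + dH + 1) (fun l μ =>
        genNijTorsion (Sop A B l μ) m (G l μ) (Sop A B l μ (H l μ))) :=
      (ih dG (dH + 1) _ _ hG hSH).cast (by omega)
    have t4 : IsHom (2 * m + dG + dH + 1) (fun l μ =>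
        genNijTorsion (Sop A B l μ) m (Sop A B l μ (G l μ)) (H l μ)) :=
      (ih (dG + 1) dH _ _ hSG hH).cast (by omega)
    have t5 : IsHom (2 * m + dG + dH + 2) (fun l μ =>
        Sop A B l μ (genNijTorsion (Sop A B l μ) m (G l μ) (Sop A B l μ (H l μ))
          + genNijTorsion (Sop A B l μ) m (Sop A B l μ (G l μ)) (H l μ))) :=
      (IsHom.apply A B (t3.add t4)).cast (by omega)
    refine (((t1.add t2).sub t5).cast (by omega)).congr fun l μ => ?_
    show _ = genNijTorsion (Sop A B l μ) (m + 1) (G l μ) (H l μ)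
    simp only [genNijTorsion, pow_two, Module.End.mul_apply]

lemma exists_expansion (A B : TensorField11 I M) (m : ℕ) (X Y : VectorFieldOn I M) :
    ∃ c : ℕ → VectorFieldOn I M, ∀ l μ : ℝ,
      genNijTorsion (Sop A B l μ) m X Y
        = ∑ k ∈ Finset.range (2 * m + 1), (l ^ k * μ ^ (2 * m - k)) • c k :=
  (isHom_genNij A B m 0 0 (fun _ _ => X) (fun _ _ => Y)
    (isHom_const X) (isHom_const Y)).cast (by omega)


lemma genNij_zero_right (T : TensorField11 I M) :
    ∀ (k : ℕ) (X : VectorFieldOn I M), genNijTorsion T k X 0 = 0 := by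
  intro k
  induction k with
  | zero => intro X; simp only [genNijTorsion]; exact lie_zero X
  | succ k ih => intro X; simp [genNijTorsion, ih, map_zero]

lemma genNij_zero_op (m : ℕ) (hm : 1 ≤ m) (X Y : VectorFieldOn I M) :
    genNijTorsion (0 : TensorField11 I M) m X Y = 0 := by
  obtain ⟨m', rfl⟩ : ∃ m', m = m' + 1 := ⟨m - 1, by omega⟩
  simp [genNijTorsion, genNij_zero_right, zero_pow]

lemma nsmul_sop (A B : TensorField11 I M) (i j : ℕ) :
    (i • A + j • B : TensorField11 I M) = Sop A B (i : ℝ) (j : ℝ) := by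
  rw [Sop, map_natCast, map_natCast, Nat.cast_smul_eq_nsmul, Nat.cast_smul_eq_nsmul]

lemma defect_double_sum (m : ℕ) (hm : 1 ≤ m) (A B : TensorField11 I M) (p q : ℕ)
    (X Y : VectorFieldOn I M) :
    defect m (List.replicate p A ++ List.replicate q B) X Y
      = ∑ i ∈ Finset.range (p + 1), ∑ j ∈ Finset.range (q + 1),
          ((p.choose i * q.choose j) : ℕ) •
            (((-1 : ℤ) ^ ((p + q) - (i + j))) • genNijTorsion (i • A + j • B) m X Y) := by
  set l := List.replicate p A ++ List.replicate q B with hl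
  have hlen : l.length = p + q := by simp [hl]
  rw [defect, hlen]
  rw [sum_map_filter_eq _ _ _ (fun s hs => by
    have hs' : s = [] := by simpa using hs
    subst hs'
    rw [List.sum_nil, genNij_zero_op m hm X Y, smul_zero])]
  rw [(l.sublists_perm_sublists'.map
    (fun s => ((-1 : ℤ) ^ (p + q - s.length)) • genNijTorsion s.sum m X Y)).sum_eq]
  rw [hl, sum_sublists'_replicate_append p
    (fun n T => ((-1 : ℤ) ^ (p + q - n)) • genNijTorsion T m X Y) A (List.replicate q B)]
  refine Finset.sum_congr rfl fun i _ => ?_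
  rw [show List.replicate q B = List.replicate q B ++ [] from by simp,
    sum_sublists'_replicate_append q
      (fun n T => ((-1 : ℤ) ^ (p + q - (i + n))) • genNijTorsion (i • A + T) m X Y) B []]
  rw [Finset.smul_sum]
  refine Finset.sum_congr rfl fun j _ => ?_
  simp [mul_smul]

lemma defect_eq_c (m : ℕ) (hm : 1 ≤ m) (A B : TensorField11 I M) (p q : ℕ)
    (X Y : VectorFieldOn I M) (c : ℕ → VectorFieldOn I M)
    (hc : ∀ l μ : ℝ, genNijTorsion (Sop A B l μ) m X Y
      = ∑ k ∈ Finset.range (2 * m + 1), (l ^ k * μ ^ (2 * m - k)) • c k) :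
    defect m (List.replicate p A ++ List.replicate q B) X Y
      = ∑ k ∈ Finset.range (2 * m + 1), (Sa p k * Sa q (2 * m - k)) • c k := by
  rw [defect_double_sum m hm A B p q X Y]
  have step1 : ∀ i ∈ Finset.range (p + 1), ∀ j ∈ Finset.range (q + 1),
      ((p.choose i * q.choose j) : ℕ) • (((-1 : ℤ) ^ ((p + q) - (i + j))) •
        genNijTorsion (i • A + j • B) m X Y)
      = ∑ k ∈ Finset.range (2 * m + 1),
          (((-1 : ℝ) ^ (p - i) * (p.choose i) * (i : ℝ) ^ k)
            * ((-1 : ℝ) ^ (q - j) * (q.choose j) * (j : ℝ) ^ (2 * m - k))) • c k := by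
    intro i hi j hj
    rw [Finset.mem_range] at hi hj
    rw [nsmul_sop, hc, Finset.smul_sum, Finset.smul_sum]
    refine Finset.sum_congr rfl fun k _ => ?_
    rw [← Int.cast_smul_eq_zsmul ℝ, ← Nat.cast_smul_eq_nsmul ℝ, smul_smul, smul_smul]
    congr 1
    push_cast
    rw [show (p + q) - (i + j) = (p - i) + (q - j) from by omega, pow_add]
    ring
  rw [Finset.sum_congr rfl fun i hi => Finset.sum_congr rfl fun j hj => step1 i hi j hj]
  rw [Eq.trans (Finset.sum_congr rfl fun i _ => Finset.sum_comm) Finset.sum_comm]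
  refine Finset.sum_congr rfl fun k _ => ?_
  rw [Finset.sum_congr rfl fun i (_ : i ∈ Finset.range (p + 1)) =>
    (Finset.sum_smul (x := c k)).symm, (Finset.sum_smul (x := c k)).symm]
  congr 1
  rw [Sa, Sa, Finset.sum_mul_sum]

end HVSAux
end HVSAuxSection

/-- For generalized Nijenhuis operators `A, B` of level `m` and real constants
`λ, μ`, one has
`(2m)! τ^{(m)}_{λA+μB}(X,Y) = Σ_{k=1}^{2m−1} C(2m,k) λ^{2m−k} μ^k P^{(m)}(A,…,A,B,…,B)(X,Y)`
(with `2m−k` copies of `A` and `k` copies of `B`); consequently, `A` and `B` generate a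
Haantjes vector space of level `m` (i.e. `τ^{(m)}_{λA+μB} = 0` for all real `λ, μ`) if
and only if the `2m−1` conditions `P^{(m)}(A,…,A,B,…,B)(X,Y) = 0`, `k = 1,…,2m−1`, hold
for all vector fields `X, Y`. -/
theorem haantjes_vector_space_criterion (m : ℕ) (hm : 1 ≤ m) (A B : TensorField11 I M)
    (hA : ∀ X Y : VectorFieldOn I M, genNijTorsion A m X Y = 0)
    (hB : ∀ X Y : VectorFieldOn I M, genNijTorsion B m X Y = 0) :
    (∀ (lam mu : ℝ) (X Y : VectorFieldOn I M),
        (2 * m).factorial •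
            genNijTorsion (algebraMap ℝ (C^(⊤ : ℕ∞)⟮I, M; ℝ⟯) lam • A +
              algebraMap ℝ (C^(⊤ : ℕ∞)⟮I, M; ℝ⟯) mu • B) m X Y =
          ∑ k ∈ Finset.Icc 1 (2 * m - 1), (2 * m).choose k •
            ((lam ^ (2 * m - k) * mu ^ k) •
              defect m (List.replicate (2 * m - k) A ++ List.replicate k B) X Y)) ∧
      ((∀ (lam mu : ℝ) (X Y : VectorFieldOn I M),
          genNijTorsion (algebraMap ℝ (C^(⊤ : ℕ∞)⟮I, M; ℝ⟯) lam • A +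
            algebraMap ℝ (C^(⊤ : ℕ∞)⟮I, M; ℝ⟯) mu • B) m X Y = 0) ↔
        (∀ k ∈ Finset.Icc 1 (2 * m - 1), ∀ X Y : VectorFieldOn I M,
          defect m (List.replicate (2 * m - k) A ++ List.replicate k B) X Y = 0)) := by
  classical
  have part1 : ∀ (lam mu : ℝ) (X Y : VectorFieldOn I M),
      (2 * m).factorial •
          genNijTorsion (algebraMap ℝ (C^(⊤ : ℕ∞)⟮I, M; ℝ⟯) lam • A +
            algebraMap ℝ (C^(⊤ : ℕ∞)⟮I, M; ℝ⟯) mu • B) m X Y =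
        ∑ k ∈ Finset.Icc 1 (2 * m - 1), (2 * m).choose k •
          ((lam ^ (2 * m - k) * mu ^ k) •
            defect m (List.replicate (2 * m - k) A ++ List.replicate k B) X Y) := by
    intro lam mu X Y
    obtain ⟨c, hc⟩ := HVSAux.exists_expansion A B m X Y
    have hc2m : c (2 * m) = 0 := by
      have h1 := hc 1 0
      have h2 : HVSAux.Sop A B 1 0 = A := by
        simp [HVSAux.Sop]
      rw [h2, hA X Y] at h1
      have h3 : ∑ k ∈ Finset.range (2 * m + 1), ((1 : ℝ) ^ k * (0 : ℝ) ^ (2 * m - k)) • c k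
          = c (2 * m) := by
        rw [Finset.sum_eq_single_of_mem (2 * m) (Finset.mem_range.mpr (by omega))
          (fun k hk hne => by
            rw [Finset.mem_range] at hk
            rw [zero_pow (show 2 * m - k ≠ 0 from by omega), mul_zero, zero_smul])]
        norm_num
      rw [h3] at h1
      exact h1.symm
    have hc0 : c 0 = 0 := by
      have h1 := hc 0 1
      have h2 : HVSAux.Sop A B 0 1 = B := by
        simp [HVSAux.Sop]
      rw [h2, hB X Y] at h1
      have h3 : ∑ k ∈ Finset.range (2 * m + 1), ((0 : ℝ) ^ k * (1 : ℝ) ^ (2 * m - k)) • c k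
          = c 0 := by
        rw [Finset.sum_eq_single_of_mem 0 (Finset.mem_range.mpr (by omega))
          (fun k hk hne => by
            rw [zero_pow hne, zero_mul, zero_smul])]
        norm_num
      rw [h3] at h1
      exact h1.symm
    have hdef : ∀ k ∈ Finset.Icc 1 (2 * m - 1),
        defect m (List.replicate (2 * m - k) A ++ List.replicate k B) X Y
          = ((((2 * m - k).factorial * k.factorial : ℕ)) : ℝ) • c (2 * m - k) := by
      intro k hk
      rw [Finset.mem_Icc] at hk
      rw [HVSAux.defect_eq_c m hm A B (2 * m - k) k X Y c hc]
      rw [Finset.sum_eq_single_of_mem (2 * m - k) (Finset.mem_range.mpr (by omega))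
        (fun t ht hne => by
          rw [Finset.mem_range] at ht
          rcases lt_or_gt_of_ne hne with h | h
          · rw [HVSAux.Sa_eq_zero h, zero_mul, zero_smul]
          · rw [HVSAux.Sa_eq_zero (show 2 * m - t < k from by omega), mul_zero, zero_smul])]
      rw [HVSAux.Sa_diag, show 2 * m - (2 * m - k) = k from by omega, HVSAux.Sa_diag]
      push_cast
      ring_nf
    have lhs_eq : (2 * m).factorial • genNijTorsion (HVSAux.Sop A B lam mu) m X Y
        = ∑ j ∈ Finset.Icc 1 (2 * m - 1),
            (((2 * m).factorial : ℝ) * lam ^ j * mu ^ (2 * m - j)) • c j := by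
      rw [hc lam mu]
      rw [Finset.smul_sum]
      rw [Finset.sum_congr rfl (fun k (_ : k ∈ Finset.range (2 * m + 1)) => by
        rw [← Nat.cast_smul_eq_nsmul ℝ, smul_smul, ← mul_assoc])]
      refine (Finset.sum_subset (fun x hx => ?_) (fun x hx hnx => ?_)).symm
      · rw [Finset.mem_Icc] at hx
        exact Finset.mem_range.mpr (by omega)
      · rw [Finset.mem_range] at hx
        rw [Finset.mem_Icc] at hnx
        have : x = 0 ∨ x = 2 * m := by omega
        rcases this with rfl | rfl
        · rw [hc0, smul_zero]
        · rw [hc2m, smul_zero]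
    have rhs_eq : (∑ k ∈ Finset.Icc 1 (2 * m - 1), (2 * m).choose k •
          ((lam ^ (2 * m - k) * mu ^ k) •
            defect m (List.replicate (2 * m - k) A ++ List.replicate k B) X Y))
        = ∑ j ∈ Finset.Icc 1 (2 * m - 1),
            (((2 * m).factorial : ℝ) * lam ^ j * mu ^ (2 * m - j)) • c j := by
      rw [Finset.sum_congr rfl (fun k hk => by
        rw [hdef k hk, ← Nat.cast_smul_eq_nsmul ℝ, smul_smul, smul_smul])]
      refine Finset.sum_nbij' (fun k => 2 * m - k) (fun k => 2 * m - k) ?_ ?_ ?_ ?_ ?_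
      · intro a ha
        simp only [Finset.mem_Icc] at ha ⊢
        omega
      · intro a ha
        simp only [Finset.mem_Icc] at ha ⊢
        omega
      · intro a ha
        simp only [Finset.mem_Icc] at ha
        omega
      · intro a ha
        simp only [Finset.mem_Icc] at ha
        omega
      · intro a ha
        simp only [Finset.mem_Icc] at ha
        have h1 : 2 * m - (2 * m - a) = a := by omega
        rw [h1]
        congr 1
        have h2 : ((2 * m).choose a : ℝ) * ((2 * m - a).factorial * a.factorial)
            = ((2 * m).factorial : ℝ) := by
          rw [← Nat.cast_mul, ← Nat.cast_mul]
          congr 1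
          rw [show (2 * m).choose a * ((2 * m - a).factorial * a.factorial)
            = (2 * m).choose a * a.factorial * (2 * m - a).factorial from by ring]
          exact Nat.choose_mul_factorial_mul_factorial (by omega)
        push_cast
        rw [← h2]
        ring
    rw [show (algebraMap ℝ (C^(⊤ : ℕ∞)⟮I, M; ℝ⟯) lam • A +
        algebraMap ℝ (C^(⊤ : ℕ∞)⟮I, M; ℝ⟯) mu • B) = HVSAux.Sop A B lam mu from rfl,
      lhs_eq, rhs_eq]
  refine ⟨part1, ?_, ?_⟩
  · intro h k hk X Y
    rw [Finset.mem_Icc] at hk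
    rw [HVSAux.defect_double_sum m hm A B (2 * m - k) k X Y]
    refine Finset.sum_eq_zero fun i _ => Finset.sum_eq_zero fun j _ => ?_
    rw [HVSAux.nsmul_sop,
      show genNijTorsion (HVSAux.Sop A B (i : ℝ) (j : ℝ)) m X Y = 0 from h (i : ℝ) (j : ℝ) X Y,
      smul_zero, smul_zero]
  · intro h lam mu X Y
    have h1 := part1 lam mu X Y
    rw [Finset.sum_congr rfl (fun k hk => by rw [h k hk X Y, smul_zero, smul_zero]),
      Finset.sum_const_zero] at h1
    have h2 : (((2 * m).factorial : ℝ)) • genNijTorsion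
        (algebraMap ℝ (C^(⊤ : ℕ∞)⟮I, M; ℝ⟯) lam • A +
          algebraMap ℝ (C^(⊤ : ℕ∞)⟮I, M; ℝ⟯) mu • B) m X Y = 0 := by
      rwa [Nat.cast_smul_eq_nsmul]
    have h3 := congrArg (fun w => (((2 * m).factorial : ℝ))⁻¹ • w) h2
    simpa [smul_smul, inv_mul_cancel₀
      (show ((2 * m).factorial : ℝ) ≠ 0 from Nat.cast_ne_zero.mpr (Nat.factorial_ne_zero _))]
      using h3
end
end

section
/- If A and B are two commuting (1,1)-tensor fields that are simultaneously diagonal in some local coordinate chart (i.e. both A and B are diagonal matrices of smooth functions in these coordinates), then the level-2 Haantjes bracket H^{(2)}_{A,B}(X,Y) vanishes for all vector fields X,Y. -/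
open scoped Manifold

noncomputable section

variable {E : Type*} [NormedAddCommGroup E] [NormedSpace ℝ E]
  {H : Type*} [TopologicalSpace H] {I : ModelWithCorners ℝ E H}
  {M : Type*} [TopologicalSpace M] [ChartedSpace H M] [IsManifold I (⊤ : ℕ∞) M]

/-- The Frölicher–Nijenhuis bracket of two (1,1)-tensor fields. -/
def fnBracket (A B : TensorField11 I M) (X Y : VectorFieldOn I M) : VectorFieldOn I M :=
  (A * B + B * A) ⁅X, Y⁆ + ⁅A X, B Y⁆ + ⁅B X, A Y⁆
    - A (⁅X, B Y⁆ + ⁅B X, Y⁆) - B (⁅X, A Y⁆ + ⁅A X, Y⁆)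

/-- The Haantjes bracket of level `m` of two (1,1)-tensor fields (level 1 is the
Frölicher–Nijenhuis bracket). -/
def haantjesBracket (A B : TensorField11 I M) :
    ℕ → VectorFieldOn I M → VectorFieldOn I M → VectorFieldOn I M
  | 0 => fnBracket A B
  | 1 => fnBracket A B
  | m + 2 => fun X Y =>
      (A * B + B * A) (haantjesBracket A B (m + 1) X Y)
        + haantjesBracket A B (m + 1) (A X) (B Y) + haantjesBracket A B (m + 1) (B X) (A Y)
        - A (haantjesBracket A B (m + 1) X (B Y) + haantjesBracket A B (m + 1) (B X) Y)
        - B (haantjesBracket A B (m + 1) X (A Y) + haantjesBracket A B (m + 1) (A X) Y)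

section Aux

variable (A B : TensorField11 I M)

lemma vf_bracket_smul_right (f : C^(⊤ : ℕ∞)⟮I, M; ℝ⟯) (X Y : VectorFieldOn I M) :
    ⁅X, f • Y⁆ = f • ⁅X, Y⁆ + (X f) • Y := by
  ext g
  simp only [Derivation.commutator_apply, Derivation.add_apply, Derivation.smul_apply,
    Derivation.leibniz, smul_eq_mul]
  ring

lemma vf_bracket_smul_left (f : C^(⊤ : ℕ∞)⟮I, M; ℝ⟯) (X Y : VectorFieldOn I M) :
    ⁅f • X, Y⁆ = f • ⁅X, Y⁆ - (Y f) • X := by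
  ext g
  simp only [Derivation.commutator_apply, Derivation.sub_apply, Derivation.smul_apply,
    Derivation.leibniz, smul_eq_mul]
  ring

lemma vf_bracket_add_right (X Y Y' : VectorFieldOn I M) :
    ⁅X, Y + Y'⁆ = ⁅X, Y⁆ + ⁅X, Y'⁆ := lie_add X Y Y'

lemma vf_bracket_add_left (X X' Y : VectorFieldOn I M) :
    ⁅X + X', Y⁆ = ⁅X, Y⁆ + ⁅X', Y⁆ := add_lie X X' Y

lemma fn_add_left (X X' Y : VectorFieldOn I M) :
    fnBracket A B (X + X') Y = fnBracket A B X Y + fnBracket A B X' Y := by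
  simp only [fnBracket, map_add, vf_bracket_add_left, vf_bracket_add_right]
  abel

lemma fn_add_right (X Y Y' : VectorFieldOn I M) :
    fnBracket A B X (Y + Y') = fnBracket A B X Y + fnBracket A B X Y' := by
  simp only [fnBracket, map_add, vf_bracket_add_left, vf_bracket_add_right]
  abel

lemma fn_smul_left (f : C^(⊤ : ℕ∞)⟮I, M; ℝ⟯) (X Y : VectorFieldOn I M) :
    fnBracket A B (f • X) Y = f • fnBracket A B X Y := by
  simp only [fnBracket, map_smul, map_add, map_sub, vf_bracket_smul_left,
    vf_bracket_smul_right, Module.End.mul_apply, LinearMap.add_apply, smul_sub, smul_add]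
  module

lemma fn_smul_right (f : C^(⊤ : ℕ∞)⟮I, M; ℝ⟯) (X Y : VectorFieldOn I M) :
    fnBracket A B X (f • Y) = f • fnBracket A B X Y := by
  simp only [fnBracket, map_smul, map_add, map_sub, vf_bracket_smul_left,
    vf_bracket_smul_right, Module.End.mul_apply, LinearMap.add_apply, smul_sub, smul_add]
  module

lemma h2_def (X Y : VectorFieldOn I M) :
    haantjesBracket A B 2 X Y =
      (A * B + B * A) (fnBracket A B X Y)
        + fnBracket A B (A X) (B Y) + fnBracket A B (B X) (A Y)
        - A (fnBracket A B X (B Y) + fnBracket A B (B X) Y)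
        - B (fnBracket A B X (A Y) + fnBracket A B (A X) Y) := rfl

lemma h2_add_left (X X' Y : VectorFieldOn I M) :
    haantjesBracket A B 2 (X + X') Y
      = haantjesBracket A B 2 X Y + haantjesBracket A B 2 X' Y := by
  simp only [h2_def, map_add, fn_add_left]
  abel

lemma h2_add_right (X Y Y' : VectorFieldOn I M) :
    haantjesBracket A B 2 X (Y + Y')
      = haantjesBracket A B 2 X Y + haantjesBracket A B 2 X Y' := by
  simp only [h2_def, map_add, fn_add_right]
  abel

lemma h2_smul_left (f : C^(⊤ : ℕ∞)⟮I, M; ℝ⟯) (X Y : VectorFieldOn I M) :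
    haantjesBracket A B 2 (f • X) Y = f • haantjesBracket A B 2 X Y := by
  simp only [h2_def, map_smul, fn_smul_left, map_add, smul_add, smul_sub]

lemma h2_smul_right (f : C^(⊤ : ℕ∞)⟮I, M; ℝ⟯) (X Y : VectorFieldOn I M) :
    haantjesBracket A B 2 X (f • Y) = f • haantjesBracket A B 2 X Y := by
  simp only [h2_def, map_smul, fn_smul_right, map_add, smul_add, smul_sub]

lemma h2_final_cancel {R V : Type*} [CommRing R] [AddCommGroup V] [Module R V]
    (A B : Module.End R V) (u v : V) (α β γ δ f g : R)
    (hAu : A u = α • u) (hAv : A v = β • v) (hBu : B u = γ • u) (hBv : B v = δ • v) :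
    (A * B + B * A) (f • v + g • u) + δ • (α • (f • v + g • u)) + β • (γ • (f • v + g • u))
      - A (δ • (f • v + g • u) + γ • (f • v + g • u))
      - B (β • (f • v + g • u) + α • (f • v + g • u)) = 0 := by
  simp only [LinearMap.add_apply, Module.End.mul_apply, map_add, map_smul, hAu, hAv, hBu, hBv,
    smul_add, smul_smul]
  module

end Aux

set_option maxHeartbeats 1000000 in
/-- If the commuting operators `A` and `B` are simultaneously diagonal in a chart —
modeled here by a commuting coordinate frame `e` (a `C^∞(M)`-basis of vector fields
with vanishing pairwise Lie brackets) in which `A` and `B` act diagonally with smooth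
eigenfunctions — then the level-2 Haantjes bracket of `A` and `B` vanishes. -/
theorem haantjesBracket_two_vanishes_of_simultaneously_diagonal
    (A B : TensorField11 I M) (hcomm : Commute A B) (n : ℕ)
    (e : Module.Basis (Fin n) (C^(⊤ : ℕ∞)⟮I, M; ℝ⟯) (VectorFieldOn I M))
    (hframe : ∀ i j, ⁅e i, e j⁆ = 0)
    (a b : Fin n → C^(⊤ : ℕ∞)⟮I, M; ℝ⟯)
    (hA : ∀ i, A (e i) = a i • e i) (hB : ∀ i, B (e i) = b i • e i)
    (X Y : VectorFieldOn I M) :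
    haantjesBracket A B 2 X Y = 0 := by
  have key : ∀ i j, haantjesBracket A B 2 (e i) (e j) = 0 := by
    intro i j
    have hfn : fnBracket A B (e i) (e j) =
        ((a i - a j) * (e i (b j)) + (b i - b j) * (e i (a j))) • e j
          + ((b i - b j) * (e j (a i)) + (a i - a j) * (e j (b i))) • e i := by
      simp only [fnBracket, hA, hB, hframe i j, map_zero, vf_bracket_smul_left,
        vf_bracket_smul_right, hframe, smul_zero, zero_add, add_zero, map_add, map_sub,
        map_smul, Derivation.smul_apply, smul_eq_mul, Module.End.mul_apply,
        LinearMap.add_apply, smul_sub, smul_add]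
      module
    rw [h2_def, hA i, hA j, hB i, hB j]
    simp only [fn_smul_left, fn_smul_right]
    rw [hfn]
    apply h2_final_cancel A B (e i) (e j) (a i) (a j) (b i) (b j) _ _
      (hA i) (hA j) (hB i) (hB j)
  let F : VectorFieldOn I M →ₗ[C^(⊤ : ℕ∞)⟮I, M; ℝ⟯] VectorFieldOn I M
      →ₗ[C^(⊤ : ℕ∞)⟮I, M; ℝ⟯] VectorFieldOn I M :=
    LinearMap.mk₂ _ (haantjesBracket A B 2) (h2_add_left A B) (h2_smul_left A B)
      (h2_add_right A B) (h2_smul_right A B)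
  have hF : F = 0 := by
    apply Module.Basis.ext e
    intro i
    apply Module.Basis.ext e
    intro j
    simpa [F] using key i j
  have : F X Y = 0 := by rw [hF]; rfl
  simpa [F] using this
end
end
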